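/- Let X be a compact Hausdorff space with C(X) acting on H satisfying the localization hypotheses, and A the algebra of local operators with parameter. A family {a_x ∈ A_x}_{x∈X} of elements of the local algebras arises as the localization {p_x(A)} of a single A ∈ A if and only if it is continuous, i.e., choosing representatives A_x ∈ a_x, for every ε > 0 each x has a neighborhood U(ε,x) with ‖A_x − A_{x'}‖ restricted to vectors supported in the closure of U(ε,x) ∩ U(ε,x') at most ε, for all x, x'. -/

import Mathlib

open Filter Topology

section Localization

variable {X : Type*} [TopologicalSpace X] [CompactSpace X] [T2Space X]
variable {H : Type*} [NormedAddCommGroup H] [InnerProductSpace ℂ H] [CompleteSpace H]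

/-- The complexification of a real-valued continuous function. -/
def toCC {X : Type*} [TopologicalSpace X] (φ : C(X, ℝ)) : C(X, ℂ) :=
  ⟨fun x => (φ x : ℂ), Complex.continuous_ofReal.comp φ.continuous⟩

/-- The localizing class `F_x` at a point `x`: continuous functions with values in `[0,1]`
equal to `1` in a neighborhood of `x`. -/
def locClass (x : X) : Set C(X, ℝ) :=
  {φ | (∀ y, φ y ∈ Set.Icc (0:ℝ) 1) ∧ ∃ U ∈ 𝓝 x, ∀ y ∈ U, φ y = 1}

variable (π : C(X, ℂ) →⋆ₐ[ℂ] (H →L[ℂ] H))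

/-- The C*-algebra `𝒜` of local operators: bounded operators commuting with the
action of every `φ ∈ C(X)` modulo compact operators. -/
def localOps : Set (H →L[ℂ] H) :=
  {T | ∀ φ : C(X, ℂ), IsCompactOperator ⇑(T ∘L π φ - π φ ∘L T)}

/-- The closed two-sided ideal `J_x` of `𝒜` generated by the functions vanishing at `x`. -/
def Jloc (x : X) : Set (H →L[ℂ] H) :=
  closure {T | ∃ (n : ℕ) (A B : Fin n → H →L[ℂ] H) (φ : Fin n → C(X, ℂ)),
    (∀ i, A i ∈ localOps π) ∧ (∀ i, B i ∈ localOps π) ∧ (∀ i, φ i x = 0) ∧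
    T = ∑ i, (A i) ∘L (π (φ i)) ∘L (B i)}

/-- The representation of `C(X)` is faithful and meets the compact operators trivially. -/
def FaithfulNoCompact : Prop :=
  Function.Injective π ∧ ∀ φ : C(X, ℂ), IsCompactOperator ⇑(π φ) → φ = 0

/-- Each localizing class `F_x`, directed by `φ ≺ ψ ↔ φψ = ψ`, converges strongly to `0`. -/
def LocStrongConv : Prop :=
  ∀ (x : X) (v : H) (ε : ℝ), 0 < ε →
    ∃ φ ∈ locClass x, ∀ ψ ∈ locClass x, φ * ψ = ψ → ‖π (toCC ψ) v‖ < ε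

end Localization

section LocalNorms

variable {X : Type*} [TopologicalSpace X] [CompactSpace X] [T2Space X]
variable {H : Type*} [NormedAddCommGroup H] [InnerProductSpace ℂ H] [CompleteSpace H]
variable (π : C(X, ℂ) →⋆ₐ[ℂ] (H →L[ℂ] H))

/-- The subspace `H_Q ⊆ H` of vectors supported in the closure of `Q ⊆ X`:
those fixed by multiplication by any continuous function equal to `1` on a
neighborhood of the closure of `Q`. -/
def suppSubspace (Q : Set X) : Set H :=
  {v | ∀ φ : C(X, ℝ), (∃ U : Set X, IsOpen U ∧ closure Q ⊆ U ∧ ∀ y ∈ U, φ y = 1) →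
    π (toCC φ) v = v}

/-- The local norm `‖B‖_Q`: the norm of the restriction of `B` to the subspace of
vectors supported in the closure of `Q`. -/
noncomputable def normOn (B : H →L[ℂ] H) (Q : Set X) : ℝ :=
  sSup {r | ∃ v ∈ suppSubspace π Q, ‖v‖ ≤ 1 ∧ r = ‖B v‖}

end LocalNorms

/-- Continuity of a family of local representatives `{a_x}`: for every `ε > 0` each
point has a neighborhood `U(ε,x)` such that `‖A_x − A_{x'}‖_{U(ε,x) ∩ U(ε,x')} ≤ ε`. -/
def ContinuousLocalFamily {X : Type*} [TopologicalSpace X] [CompactSpace X] [T2Space X]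
    {H : Type*} [NormedAddCommGroup H] [InnerProductSpace ℂ H] [CompleteSpace H]
    (π : C(X, ℂ) →⋆ₐ[ℂ] (H →L[ℂ] H)) (a : X → H →L[ℂ] H) : Prop :=
  ∀ ε : ℝ, 0 < ε → ∃ U : X → Set X, (∀ x, U x ∈ 𝓝 x) ∧
    ∀ x x' : X, normOn π (a x - a x') (U x ∩ U x') ≤ ε


/-!
Forward direction: a generator `A π(φ) B` of `J_x` (with `φ x = 0`) has small local norm near
`x`. On vectors fixed by a bump `π ψ'`, write `B v = π(ψ) B v + [B, π ψ] π(ψ') v`; the first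
term is killed because `φ` is small on the support of `ψ`, the second because the compact
commutator composed with `π ψ'` tends to `0` in norm along the localizing net (strong convergence
is uniform on the compact image of the unit ball). Locally negligible operators form a closed
subspace, so `A - a x` is small near `x`, and continuity follows from the triangle inequality.

Backward direction: for a partition `∑ σᵢ² = 1` subordinate to the neighbourhoods `U(2⁻ⁿ, ·)`,
the glued operator `Aₙ = ∑ π(σᵢ) a(cᵢ) π(σᵢ)` is local, is within `2⁻ⁿ` of `a x` modulo `J_x`,
and consecutive `Aₙ` are within `2⁻ⁿ` of each other modulo compact operators. Both estimates
reduce, after commuting `π(σᵢ)` past local operators at the cost of compacts, to the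
almost-orthogonality bound `‖∑ π(σᵢ) Dᵢ π(τᵢ)‖ ≤ supᵢ ‖Dᵢ‖_{supp τᵢ}` valid when
`∑ σᵢ² ≤ 1` and `∑ τᵢ² ≤ 1`. Subtracting the accumulated compact corrections makes `(Aₙ)`
Cauchy, and its limit realizes the family because compact operators lie in every `J_x`.
-/

section Basic

variable {X : Type*} [TopologicalSpace X]

@[simp] lemma toCC_apply (f : C(X, ℝ)) (y : X) : toCC f y = (f y : ℂ) := rfl

lemma toCC_one : toCC (1 : C(X, ℝ)) = 1 := by ext; simp

lemma toCC_mul (f g : C(X, ℝ)) : toCC (f * g) = toCC f * toCC g := by ext; simp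

lemma toCC_sub (f g : C(X, ℝ)) : toCC (f - g) = toCC f - toCC g := by ext; simp

lemma toCC_sum {ι : Type*} (s : Finset ι) (f : ι → C(X, ℝ)) :
    toCC (∑ i ∈ s, f i) = ∑ i ∈ s, toCC (f i) := by ext; simp

lemma isSelfAdjoint_toCC (f : C(X, ℝ)) : IsSelfAdjoint (toCC f) := by
  ext; simp [Complex.conj_ofReal]

end Basic

section Representation

variable {X : Type*} [TopologicalSpace X]
variable {H : Type*} [NormedAddCommGroup H] [InnerProductSpace ℂ H] [CompleteSpace H]
variable (π : C(X, ℂ) →⋆ₐ[ℂ] (H →L[ℂ] H))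

lemma isSelfAdjoint_pi_toCC (f : C(X, ℝ)) : IsSelfAdjoint (π (toCC f)) :=
  (isSelfAdjoint_toCC f).map π

lemma pi_toCC_mul (f g : C(X, ℝ)) : π (toCC f) * π (toCC g) = π (toCC (f * g)) := by
  rw [toCC_mul, map_mul]

lemma norm_pi_toCC_le_one [CompactSpace X] {f : C(X, ℝ)} (hf : ∀ y, f y ∈ Set.Icc (0 : ℝ) 1) :
    ‖π (toCC f)‖ ≤ 1 := by
  refine (NonUnitalStarAlgHom.norm_apply_le π _).trans ((ContinuousMap.norm_le _ zero_le_one).2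
    fun y => ?_)
  simpa [abs_le] using ⟨(hf y).1.trans' (by norm_num), (hf y).2⟩

lemma sum_pi_toCC_mul_self {ι : Type*} [Fintype ι] {σ : ι → C(X, ℝ)}
    (hσ : ∀ y, ∑ i, σ i y ^ 2 = 1) : ∑ i, π (toCC (σ i)) * π (toCC (σ i)) = 1 := by
  have : ∑ i, σ i * σ i = 1 := by ext y; simpa [sq] using hσ y
  simp only [pi_toCC_mul, ← map_sum, ← toCC_sum, this, toCC_one, map_one]

lemma sum_norm_sq_pi_toCC_le [CompactSpace X] {ι : Type*} (s : Finset ι) {τ : ι → C(X, ℝ)}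
    (hτ : ∀ y, ∑ i ∈ s, τ i y ^ 2 ≤ 1) (v : H) :
    ∑ i ∈ s, ‖π (toCC (τ i)) v‖ ^ 2 ≤ ‖v‖ ^ 2 := by
  have hnorm : ∀ i, ‖π (toCC (τ i)) v‖ ^ 2 =
      RCLike.re (inner ℂ v (π (toCC (τ i * τ i)) v)) := by
    intro i
    rw [← pi_toCC_mul, mul_apply_eq_comp, ← inner_self_eq_norm_sq (𝕜 := ℂ)]
    exact congrArg _ ((isSelfAdjoint_pi_toCC π (τ i)).isSymmetric v _)
  have hT : ‖π (toCC (∑ i ∈ s, τ i * τ i))‖ ≤ 1 :=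
    norm_pi_toCC_le_one π fun y => by
      simpa [← sq] using ⟨Finset.sum_nonneg fun i _ => sq_nonneg (τ i y), hτ y⟩
  calc ∑ i ∈ s, ‖π (toCC (τ i)) v‖ ^ 2
      = RCLike.re (inner ℂ v (π (toCC (∑ i ∈ s, τ i * τ i)) v)) := by
        simp only [hnorm, toCC_sum, map_sum, sum_apply, inner_sum, map_sum]
    _ ≤ ‖v‖ * ‖π (toCC (∑ i ∈ s, τ i * τ i)) v‖ :=
        (RCLike.re_le_norm _).trans (norm_inner_le_norm _ _)
    _ ≤ ‖v‖ ^ 2 := by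
        nlinarith [(ContinuousLinearMap.le_opNorm _ v).trans
          (mul_le_of_le_one_left (norm_nonneg v) hT), norm_nonneg v]

end Representation

section HilbertSpace

variable {𝕜 E : Type*} [RCLike 𝕜] [NormedAddCommGroup E] [InnerProductSpace 𝕜 E] [CompleteSpace E]

open ContinuousLinearMap in
theorem norm_sum_mul_mul_le {ι : Type*} (s : Finset ι) (P D Q : ι → E →L[𝕜] E) {ε : ℝ}
    (hε : 0 ≤ ε) (hP : ∀ w, ∑ i ∈ s, ‖adjoint (P i) w‖ ^ 2 ≤ ‖w‖ ^ 2)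
    (hQ : ∀ v, ∑ i ∈ s, ‖Q i v‖ ^ 2 ≤ ‖v‖ ^ 2)
    (hD : ∀ i ∈ s, ∀ v, ‖D i (Q i v)‖ ≤ ε * ‖Q i v‖) :
    ‖∑ i ∈ s, P i * D i * Q i‖ ≤ ε := by
  refine opNorm_le_bound _ hε fun v => ?_
  set w := (∑ i ∈ s, P i * D i * Q i) v
  have hsqrt : ∀ u : E, ∀ f : ι → E →L[𝕜] E, (∀ u, ∑ i ∈ s, ‖f i u‖ ^ 2 ≤ ‖u‖ ^ 2) →
      √(∑ i ∈ s, ‖f i u‖ ^ 2) ≤ ‖u‖ := fun u f hf =>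
    Real.sqrt_le_iff.2 ⟨norm_nonneg u, hf u⟩
  have key : ‖w‖ ^ 2 ≤ ε * ‖v‖ * ‖w‖ :=
    calc ‖w‖ ^ 2 = RCLike.re (inner 𝕜 ((∑ i ∈ s, P i * D i * Q i) v) w) :=
          (inner_self_eq_norm_sq w).symm
      _ = ∑ i ∈ s, RCLike.re (inner 𝕜 (D i (Q i v)) (adjoint (P i) w)) := by
          simp only [sum_apply, mul_apply_eq_comp, sum_inner, map_sum, adjoint_inner_right]
      _ ≤ ∑ i ∈ s, ε * ‖Q i v‖ * ‖adjoint (P i) w‖ := Finset.sum_le_sum fun i hi =>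
          (RCLike.re_le_norm _).trans <| (norm_inner_le_norm _ _).trans <|
            mul_le_mul_of_nonneg_right (hD i hi v) (norm_nonneg _)
      _ = ε * ∑ i ∈ s, ‖Q i v‖ * ‖adjoint (P i) w‖ := by
          rw [Finset.mul_sum]; simp only [mul_assoc]
      _ ≤ ε * (√(∑ i ∈ s, ‖Q i v‖ ^ 2) * √(∑ i ∈ s, ‖adjoint (P i) w‖ ^ 2)) :=
          mul_le_mul_of_nonneg_left (Real.sum_mul_le_sqrt_mul_sqrt _ _ _) hε
      _ ≤ ε * ‖v‖ * ‖w‖ := by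
          rw [mul_assoc]
          exact mul_le_mul_of_nonneg_left (mul_le_mul (hsqrt v Q hQ)
            (hsqrt w (fun i => adjoint (P i)) hP) (Real.sqrt_nonneg _) (norm_nonneg v)) hε
  rcases (norm_nonneg w).eq_or_lt with hw | hw
  · rw [← hw]; positivity
  · nlinarith

open ContinuousLinearMap in
theorem IsCompactOperator.exists_finset_norm_comp_le {K : E →L[𝕜] E} (hK : IsCompactOperator K)
    {ε : ℝ} (hε : 0 < ε) :
    ∃ s : Finset E, ∃ η > 0, ∀ P : E →L[𝕜] E, IsSelfAdjoint P → ‖P‖ ≤ 1 →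
      (∀ z ∈ s, ‖P z‖ < η) → ‖K ∘L P‖ ≤ ε := by
  classical
  obtain ⟨δ, hδ, hKδ⟩ := exists_pos_mul_lt (show 0 < ε ^ 2 / 2 by positivity) ‖K‖
  obtain ⟨t, -, ht, hcover⟩ := finite_cover_balls_of_compact
    (hK.isCompact_closure_image_closedBall 1) hδ
  refine ⟨ht.toFinset.image (adjoint K), ε ^ 2 / 2, by positivity,
    fun P hP hP1 hPs => opNorm_le_of_unit_norm hε.le fun u hu => ?_⟩
  -- `K (P u)` is `δ`-close to a net point `w`, and `⟪K (P u), w⟫ = ⟪u, P (K† w)⟫` is small.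
  set y := K (P u)
  have hPu : P u ∈ Metric.closedBall 0 1 := by
    simpa [hu] using P.le_opNorm_of_le hu.le |>.trans (by simpa using hP1)
  obtain ⟨w, hwt, hyw⟩ := Set.mem_iUnion₂.1 (hcover (subset_closure ⟨P u, hPu, rfl⟩))
  have hy : ‖y‖ ≤ ‖K‖ := (K.le_opNorm_of_le (mem_closedBall_zero_iff.1 hPu)).trans_eq (mul_one _)
  have hfar : RCLike.re (inner 𝕜 y (y - w)) ≤ ‖K‖ * δ :=
    (RCLike.re_le_norm _).trans <| (norm_inner_le_norm _ _).trans <|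
      mul_le_mul hy (by rw [Metric.mem_ball, dist_eq_norm] at hyw; exact hyw.le) (norm_nonneg _)
        (norm_nonneg _)
  have hnear : RCLike.re (inner 𝕜 y w) < ε ^ 2 / 2 := by
    have : inner 𝕜 y w = inner 𝕜 u (P (adjoint K w)) := by
      rw [← adjoint_inner_right]
      exact hP.isSymmetric u _
    rw [this]
    refine (RCLike.re_le_norm _).trans_lt <| (norm_inner_le_norm _ _).trans_lt ?_
    rw [hu, one_mul]
    exact hPs _ (Finset.mem_image_of_mem _ (ht.mem_toFinset.2 hwt))
  have : ‖y‖ ^ 2 = RCLike.re (inner 𝕜 y (y - w)) + RCLike.re (inner 𝕜 y w) := by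
    rw [← map_add, ← inner_add_right, sub_add_cancel, inner_self_eq_norm_sq]
  have : ‖y‖ ^ 2 ≤ ε ^ 2 := by linarith
  exact (pow_le_pow_iff_left₀ (norm_nonneg _) hε.le two_ne_zero).1 this

end HilbertSpace

lemma isCompactOperator_mul_mul {𝕜 E : Type*} [NontriviallyNormedField 𝕜]
    [NormedAddCommGroup E] [NormedSpace 𝕜 E] (A B : E →L[𝕜] E) {K : E →L[𝕜] E}
    (hK : IsCompactOperator K) : IsCompactOperator ⇑(A * K * B) :=
  (hK.comp_clm B).clm_comp A

lemma isCompactOperator_sum {𝕜 E ι : Type*} [NontriviallyNormedField 𝕜]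
    [NormedAddCommGroup E] [NormedSpace 𝕜 E] (s : Finset ι) {K : ι → E →L[𝕜] E}
    (hK : ∀ i ∈ s, IsCompactOperator (K i)) : IsCompactOperator ⇑(∑ i ∈ s, K i) :=
  (compactOperator (RingHom.id 𝕜) E E).sum_mem hK

section LocalOperators

variable {X : Type*} [TopologicalSpace X]
variable {H : Type*} [NormedAddCommGroup H] [InnerProductSpace ℂ H] [CompleteSpace H]
variable (π : C(X, ℂ) →⋆ₐ[ℂ] (H →L[ℂ] H))

open ContinuousLinearMap

def localOpsSubalgebra : Subalgebra ℂ (H →L[ℂ] H) where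
  carrier := localOps π
  mul_mem' {S T} hS hT φ := by
    have : (S * T) ∘L π φ - π φ ∘L (S * T) =
        S ∘L (T ∘L π φ - π φ ∘L T) + (S ∘L π φ - π φ ∘L S) ∘L T := by
      ext; simp [mul_apply_eq_comp]
    rw [this]
    exact ((hT φ).clm_comp S).add ((hS φ).comp_clm T)
  add_mem' {S T} hS hT φ := by
    rw [add_comp, comp_add, add_sub_add_comm]
    exact (hS φ).add (hT φ)
  algebraMap_mem' c φ := by
    have : algebraMap ℂ (H →L[ℂ] H) c ∘L π φ - π φ ∘L algebraMap ℂ (H →L[ℂ] H) c = 0 := by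
      ext; simp [Algebra.algebraMap_eq_smul_one]
    rw [this]
    exact isCompactOperator_zero

lemma pi_mem_localOps (f : C(X, ℂ)) : π f ∈ localOps π := fun φ => by
  have : π f ∘L π φ - π φ ∘L π f = 0 := by
    rw [← mul_def, ← mul_def, ← map_mul, ← map_mul, mul_comm, sub_self]
  rw [this]
  exact isCompactOperator_zero

lemma compact_mem_localOps {K : H →L[ℂ] H} (hK : IsCompactOperator K) : K ∈ localOps π :=
  fun φ => (hK.comp_clm (π φ)).sub (hK.clm_comp (π φ))

lemma isClosed_localOps : IsClosed (localOps π) := by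
  simp only [localOps, Set.ofPred_forall]
  exact isClosed_iInter fun φ => isClosed_setOfPred_isCompactOperator.preimage
    ((continuous_id.mul continuous_const).sub (continuous_const.mul continuous_id))

def JgenSubmodule (x : X) : Submodule ℂ (H →L[ℂ] H) where
  carrier := {T | ∃ (n : ℕ) (A B : Fin n → H →L[ℂ] H) (φ : Fin n → C(X, ℂ)),
    (∀ i, A i ∈ localOps π) ∧ (∀ i, B i ∈ localOps π) ∧ (∀ i, φ i x = 0) ∧
    T = ∑ i, (A i) ∘L (π (φ i)) ∘L (B i)}
  zero_mem' := ⟨0, Fin.elim0, Fin.elim0, Fin.elim0, fun i => i.elim0, fun i => i.elim0,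
    fun i => i.elim0, by simp⟩
  add_mem' := by
    rintro _ _ ⟨n, A, B, φ, hA, hB, hφ, rfl⟩ ⟨m, A', B', φ', hA', hB', hφ', rfl⟩
    refine ⟨n + m, Fin.append A A', Fin.append B B', Fin.append φ φ',
      Fin.addCases (by simpa using hA) (by simpa using hA'),
      Fin.addCases (by simpa using hB) (by simpa using hB'),
      Fin.addCases (by simpa using hφ) (by simpa using hφ'), ?_⟩
    simp [Fin.sum_univ_add]
  smul_mem' c := by
    rintro _ ⟨n, A, B, φ, hA, hB, hφ, rfl⟩
    refine ⟨n, fun i => c • A i, B, φ, fun i => (localOpsSubalgebra π).smul_mem (hA i) c, hB,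
      hφ, ?_⟩
    simp [Finset.smul_sum]

/-- Its carrier is `Jloc π x` by definition. -/
noncomputable def JlocSubmodule (x : X) : Submodule ℂ (H →L[ℂ] H) :=
  (JgenSubmodule π x).topologicalClosure

lemma isClosed_Jloc (x : X) : IsClosed (Jloc π x) := isClosed_closure

lemma comp_pi_comp_mem_Jloc {x : X} {A B : H →L[ℂ] H} (hA : A ∈ localOps π)
    (hB : B ∈ localOps π) {φ : C(X, ℂ)} (hφ : φ x = 0) : A ∘L π φ ∘L B ∈ Jloc π x :=
  subset_closure ⟨1, fun _ => A, fun _ => B, fun _ => φ, fun _ => hA, fun _ => hB, fun _ => hφ,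
    by simp⟩

lemma comp_pi_mem_Jloc {x : X} {A : H →L[ℂ] H} (hA : A ∈ localOps π) {φ : C(X, ℂ)}
    (hφ : φ x = 0) : A ∘L π φ ∈ Jloc π x := by
  simpa [one_def] using comp_pi_comp_mem_Jloc π hA (localOpsSubalgebra π).one_mem hφ

end LocalOperators

section LocalNorm

variable {X : Type*} [TopologicalSpace X]
variable {H : Type*} [NormedAddCommGroup H] [InnerProductSpace ℂ H] [CompleteSpace H]
variable (π : C(X, ℂ) →⋆ₐ[ℂ] (H →L[ℂ] H))

def suppSubmodule (Q : Set X) : Submodule ℂ H where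
  carrier := suppSubspace π Q
  zero_mem' _ _ := map_zero _
  add_mem' hv hw φ hφ := by rw [map_add, hv φ hφ, hw φ hφ]
  smul_mem' c _ hv φ hφ := by rw [map_smul, hv φ hφ]

lemma normOn_eq_norm_comp_subtypeL (B : H →L[ℂ] H) (Q : Set X) :
    normOn π B Q = ‖B ∘L (suppSubmodule π Q).subtypeL‖ := by
  rw [← ContinuousLinearMap.sSup_unitClosedBall_eq_norm, normOn]
  congr 1
  ext r
  constructor
  · rintro ⟨v, hv, hv1, rfl⟩
    exact ⟨⟨v, hv⟩, by simpa using hv1, rfl⟩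
  · rintro ⟨v, hv1, rfl⟩
    exact ⟨v, v.2, by simpa using hv1, rfl⟩

variable {π}

lemma norm_apply_le_normOn_mul {Q : Set X} {v : H} (hv : v ∈ suppSubspace π Q)
    (B : H →L[ℂ] H) : ‖B v‖ ≤ normOn π B Q * ‖v‖ := by
  rw [normOn_eq_norm_comp_subtypeL]
  exact (B ∘L (suppSubmodule π Q).subtypeL).le_opNorm ⟨v, hv⟩

lemma normOn_le_of_forall {B : H →L[ℂ] H} {Q : Set X} {c : ℝ} (hc : 0 ≤ c)
    (h : ∀ v ∈ suppSubspace π Q, ‖B v‖ ≤ c * ‖v‖) : normOn π B Q ≤ c := by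
  rw [normOn_eq_norm_comp_subtypeL]
  exact ContinuousLinearMap.opNorm_le_bound _ hc fun v => h v v.2

lemma normOn_nonneg (B : H →L[ℂ] H) (Q : Set X) : 0 ≤ normOn π B Q := by
  rw [normOn_eq_norm_comp_subtypeL]
  exact ContinuousLinearMap.opNorm_nonneg _

lemma normOn_mono (B : H →L[ℂ] H) {Q Q' : Set X} (h : Q ⊆ Q') :
    normOn π B Q ≤ normOn π B Q' :=
  normOn_le_of_forall (normOn_nonneg B Q') fun _ hv =>
    norm_apply_le_normOn_mul
      (fun φ ⟨U, hU, hQU, hφ⟩ => hv φ ⟨U, hU, (closure_mono h).trans hQU, hφ⟩) B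

lemma normOn_add_le (B C : H →L[ℂ] H) (Q : Set X) :
    normOn π (B + C) Q ≤ normOn π B Q + normOn π C Q := by
  simp only [normOn_eq_norm_comp_subtypeL, ContinuousLinearMap.add_comp]
  exact ContinuousLinearMap.opNorm_add_le _ _

lemma normOn_sub_le (B C : H →L[ℂ] H) (Q : Set X) :
    normOn π (B - C) Q ≤ normOn π B Q + normOn π C Q := by
  simp only [normOn_eq_norm_comp_subtypeL, ContinuousLinearMap.sub_comp]
  exact norm_sub_le (E := suppSubmodule π Q →L[ℂ] H) _ _

lemma normOn_comp_le (A B : H →L[ℂ] H) (Q : Set X) :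
    normOn π (A ∘L B) Q ≤ ‖A‖ * normOn π B Q := by
  simp only [normOn_eq_norm_comp_subtypeL, ContinuousLinearMap.comp_assoc]
  exact ContinuousLinearMap.opNorm_comp_le _ _

lemma normOn_le_norm (B : H →L[ℂ] H) (Q : Set X) : normOn π B Q ≤ ‖B‖ :=
  normOn_le_of_forall (norm_nonneg B) fun v _ => B.le_opNorm v

lemma pi_toCC_mem_suppSubspace {Q : Set X} {f : C(X, ℝ)} (hf : ∀ y, f y ≠ 0 → y ∈ Q) (v : H) :
    π (toCC f) v ∈ suppSubspace π Q := by
  rintro φ ⟨U, -, hQU, hφ⟩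
  have : φ * f = f := by
    ext y
    by_cases hy : f y = 0
    · simp [hy]
    · simp [hφ y (hQU (subset_closure (hf y hy)))]
  rw [← mul_apply_eq_comp, pi_toCC_mul, this]

lemma exists_mem_nhds_forall_suppSubspace_fixed [RegularSpace X] {x : X} {ψ : C(X, ℝ)}
    (hψ : ψ ∈ locClass x) : ∃ U ∈ 𝓝 x, ∀ v ∈ suppSubspace π U, π (toCC ψ) v = v := by
  obtain ⟨N, hN, hψN⟩ := hψ.2
  obtain ⟨U, hU, hUc, hUN⟩ := exists_mem_nhds_isClosed_subset (interior_mem_nhds.2 hN)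
  exact ⟨U, hU, fun v hv => hv ψ ⟨interior N, isOpen_interior, by rwa [hUc.closure_eq],
    fun y hy => hψN y (interior_subset hy)⟩⟩

end LocalNorm

section LocalizingFilter

variable {X : Type*} [TopologicalSpace X]

lemma exists_mem_locClass_support_subset [T4Space X] {x : X} {V : Set X} (hV : V ∈ 𝓝 x) :
    ∃ θ ∈ locClass x, ∀ y, θ y ≠ 0 → y ∈ V := by
  obtain ⟨t, ht, htc, htV⟩ := exists_mem_nhds_isClosed_subset (interior_mem_nhds.2 hV)
  obtain ⟨θ, hθ0, hθ1, hθ⟩ := exists_continuous_zero_one_of_isClosed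
    isOpen_interior.isClosed_compl htc htV.disjoint_compl_left
  exact ⟨θ, ⟨hθ, t, ht, fun y hy => hθ1 hy⟩,
    fun y hy => interior_subset (by_contra fun h => hy (hθ0 h))⟩

lemma apply_eq_one_of_mem_locClass {x : X} {φ : C(X, ℝ)} (hφ : φ ∈ locClass x) : φ x = 1 :=
  let ⟨_, hU, h⟩ := hφ.2
  h x (mem_of_mem_nhds hU)

lemma mul_eq_self_of_support {φ ψ : C(X, ℝ)} (h : ∀ y, ψ y ≠ 0 → φ y = 1) : φ * ψ = ψ := by
  ext y
  by_cases hy : ψ y = 0 <;> simp [hy, h y]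

lemma apply_ne_zero_of_mul_eq_self {θ ψ : C(X, ℝ)} (h : θ * ψ = ψ) {y : X} (hy : ψ y ≠ 0) :
    θ y ≠ 0 := fun hθ => hy (by simpa [hθ] using (congrArg (· y) h).symm)

/-- The tails of the net `F_x` directed by `φ ≺ ψ ↔ φψ = ψ`; `LocStrongConv π` says that
`π ψ → 0` strongly along this filter. -/
def locFilter [T4Space X] (x : X) : Filter C(X, ℝ) where
  sets := {S | ∃ φ ∈ locClass x, ∀ ψ ∈ locClass x, φ * ψ = ψ → ψ ∈ S}
  univ_sets := ⟨1, ⟨fun _ => by simp, Set.univ, univ_mem, fun _ _ => rfl⟩, fun _ _ _ => trivial⟩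
  sets_of_superset := fun ⟨φ, hφ, h⟩ hST => ⟨φ, hφ, fun ψ hψ he => hST (h ψ hψ he)⟩
  inter_sets := by
    rintro S T ⟨φ₁, ⟨-, U₁, hU₁, h₁⟩, hS⟩ ⟨φ₂, ⟨-, U₂, hU₂, h₂⟩, hT⟩
    obtain ⟨θ, hθ, hθU⟩ := exists_mem_locClass_support_subset (inter_mem hU₁ hU₂)
    refine ⟨θ, hθ, fun ψ hψ he => ⟨hS ψ hψ ?_, hT ψ hψ ?_⟩⟩ <;>
      refine mul_eq_self_of_support fun y hy => ?_
    · exact h₁ y (hθU y (apply_ne_zero_of_mul_eq_self he hy)).1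
    · exact h₂ y (hθU y (apply_ne_zero_of_mul_eq_self he hy)).2

variable [T4Space X]

lemma eventually_mem_locClass (x : X) : ∀ᶠ ψ in locFilter x, ψ ∈ locClass x :=
  ⟨1, ⟨fun _ => by simp, Set.univ, univ_mem, fun _ _ => rfl⟩, fun _ hψ _ => hψ⟩

lemma eventually_mul_eq_self {x : X} {φ : C(X, ℝ)} (hφ : φ ∈ locClass x) :
    ∀ᶠ ψ in locFilter x, φ * ψ = ψ :=
  ⟨φ, hφ, fun _ _ h => h⟩

instance (x : X) : (locFilter x).NeBot := by
  refine ⟨fun h => ?_⟩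
  obtain ⟨φ, ⟨-, U, hU, hφU⟩, hφ⟩ := Filter.empty_mem_iff_bot.2 h
  obtain ⟨ψ, hψ, hψU⟩ := exists_mem_locClass_support_subset hU
  exact hφ ψ hψ (mul_eq_self_of_support fun y hy => hφU y (hψU y hy))

end LocalizingFilter

section CompactOperators

variable {X : Type*} [TopologicalSpace X] [CompactSpace X] [T2Space X]
variable {H : Type*} [NormedAddCommGroup H] [InnerProductSpace ℂ H] [CompleteSpace H]
variable {π : C(X, ℂ) →⋆ₐ[ℂ] (H →L[ℂ] H)}

lemma LocStrongConv.eventually_norm_lt (hconv : LocStrongConv π) (x : X) (v : H) {ε : ℝ}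
    (hε : 0 < ε) : ∀ᶠ ψ in locFilter x, ‖π (toCC ψ) v‖ < ε :=
  hconv x v ε hε

lemma LocStrongConv.tendsto_comp_pi (hconv : LocStrongConv π) (x : X) {K : H →L[ℂ] H}
    (hK : IsCompactOperator K) : Tendsto (fun ψ => K ∘L π (toCC ψ)) (locFilter x) (𝓝 0) := by
  refine Metric.tendsto_nhds.2 fun ε hε => ?_
  obtain ⟨s, η, hη, hs⟩ := hK.exists_finset_norm_comp_le (half_pos hε)
  filter_upwards [eventually_mem_locClass x,
    (eventually_all_finset s).2 fun z _ => hconv.eventually_norm_lt x z hη] with ψ hψ hψs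
  rw [dist_zero_right]
  exact (hs _ (isSelfAdjoint_pi_toCC π ψ) (norm_pi_toCC_le_one π hψ.1) hψs).trans_lt
    (half_lt_self hε)

lemma LocStrongConv.compact_mem_Jloc (hconv : LocStrongConv π) (x : X) {K : H →L[ℂ] H}
    (hK : IsCompactOperator K) : K ∈ Jloc π x := by
  have hlim : Tendsto (fun ψ => K ∘L π (toCC (1 - ψ))) (locFilter x) (𝓝 K) := by
    simpa [toCC_sub, toCC_one, ContinuousLinearMap.comp_sub, ContinuousLinearMap.one_def,
      ContinuousLinearMap.comp_id]
      using tendsto_const_nhds.sub (hconv.tendsto_comp_pi x hK)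
  refine (isClosed_Jloc π x).mem_of_tendsto hlim ((eventually_mem_locClass x).mono fun ψ hψ => ?_)
  exact comp_pi_mem_Jloc π (compact_mem_localOps π hK)
    (by simp [toCC_sub, apply_eq_one_of_mem_locClass hψ])

end CompactOperators

section LocallyNegligible

variable {X : Type*} [TopologicalSpace X]
variable {H : Type*} [NormedAddCommGroup H] [InnerProductSpace ℂ H] [CompleteSpace H]
variable (π : C(X, ℂ) →⋆ₐ[ℂ] (H →L[ℂ] H))

lemma exists_mem_nhds_normOn_comp_lt {x : X} {T : H →L[ℂ] H}
    (hT : ∀ ε > 0, ∃ U ∈ 𝓝 x, normOn π T U ≤ ε) (A : H →L[ℂ] H) {ε : ℝ} (hε : 0 < ε) :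
    ∃ U ∈ 𝓝 x, normOn π (A ∘L T) U ≤ ε := by
  obtain ⟨δ, hδ, hAδ⟩ := exists_pos_mul_lt hε ‖A‖
  obtain ⟨U, hU, hTU⟩ := hT δ hδ
  exact ⟨U, hU, (normOn_comp_le A T U).trans
    ((mul_le_mul_of_nonneg_left hTU (norm_nonneg A)).trans hAδ.le)⟩

def locallyNegligible (x : X) : Submodule ℂ (H →L[ℂ] H) where
  carrier := {T | ∀ ε > 0, ∃ U ∈ 𝓝 x, normOn π T U ≤ ε}
  zero_mem' ε hε := ⟨Set.univ, univ_mem, normOn_le_of_forall hε.le fun v _ => by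
    simpa using mul_nonneg hε.le (norm_nonneg v)⟩
  add_mem' {S T} hS hT ε hε := by
    obtain ⟨U, hU, hSU⟩ := hS (ε / 2) (half_pos hε)
    obtain ⟨V, hV, hTV⟩ := hT (ε / 2) (half_pos hε)
    refine ⟨U ∩ V, inter_mem hU hV, (normOn_add_le S T _).trans ?_⟩
    linarith [normOn_mono (π := π) S (Set.inter_subset_left : U ∩ V ⊆ U),
      normOn_mono (π := π) T (Set.inter_subset_right : U ∩ V ⊆ V)]
  smul_mem' c T hT ε hε := by
    simpa [ContinuousLinearMap.smul_comp, ContinuousLinearMap.one_def] using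
      exists_mem_nhds_normOn_comp_lt π hT (c • 1) hε

lemma comp_mem_locallyNegligible {x : X} (A : H →L[ℂ] H) {T : H →L[ℂ] H}
    (hT : T ∈ locallyNegligible π x) : A ∘L T ∈ locallyNegligible π x :=
  fun _ hε => exists_mem_nhds_normOn_comp_lt π hT A hε

lemma isClosed_locallyNegligible (x : X) :
    IsClosed (locallyNegligible π x : Set (H →L[ℂ] H)) := by
  refine isClosed_of_closure_subset fun T hT ε hε => ?_
  obtain ⟨S, hS, hTS⟩ := Metric.mem_closure_iff.1 hT (ε / 2) (half_pos hε)
  obtain ⟨U, hU, hSU⟩ := hS (ε / 2) (half_pos hε)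
  refine ⟨U, hU, ?_⟩
  calc normOn π T U = normOn π ((T - S) + S) U := by rw [sub_add_cancel]
    _ ≤ ‖T - S‖ + ε / 2 := (normOn_add_le _ _ _).trans (add_le_add (normOn_le_norm _ _) hSU)
    _ ≤ ε := by rw [← dist_eq_norm]; linarith

end LocallyNegligible

section Realizable

variable {X : Type*} [TopologicalSpace X] [CompactSpace X] [T2Space X]
variable {H : Type*} [NormedAddCommGroup H] [InnerProductSpace ℂ H] [CompleteSpace H]
variable {π : C(X, ℂ) →⋆ₐ[ℂ] (H →L[ℂ] H)}

open ContinuousLinearMap in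
lemma LocStrongConv.pi_comp_mem_locallyNegligible (hconv : LocStrongConv π) {x : X}
    {φ : C(X, ℂ)} (hφ : φ x = 0) {B : H →L[ℂ] H} (hB : B ∈ localOps π) :
    π φ ∘L B ∈ locallyNegligible π x := by
  intro ε hε
  obtain ⟨δ, hδ, hBδ⟩ := exists_pos_mul_lt (half_pos hε) ‖B‖
  obtain ⟨η, hη, hφη⟩ := exists_pos_mul_lt (half_pos hε) ‖φ‖
  have hsmall : {y | ‖φ y‖ < δ} ∈ 𝓝 x :=
    (isOpen_lt (by fun_prop) continuous_const).mem_nhds (by simpa [hφ] using hδ)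
  obtain ⟨ψ, hψ, hψφ⟩ := exists_mem_locClass_support_subset hsmall
  obtain ⟨ψ', hψ', hψψ', hC⟩ := ((eventually_mem_locClass x).and ((eventually_mul_eq_self hψ).and
    ((Metric.tendsto_nhds.1 (hconv.tendsto_comp_pi x (hB (toCC ψ)))) η hη))).exists
  obtain ⟨U, hU, hfix⟩ := exists_mem_nhds_forall_suppSubspace_fixed (π := π) hψ'
  refine ⟨U, hU, normOn_le_of_forall hε.le fun v hv => ?_⟩
  -- `v` is fixed by `π ψ`, so `B v` differs from `π ψ (B v)` by the compact commutator.
  have hψv : π (toCC ψ) v = v := by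
    rw [← hfix v hv, ← mul_apply_eq_comp, pi_toCC_mul, hψψ']
  have hsplit : π φ (B v) = π (φ * toCC ψ) (B v) +
      π φ (((B ∘L π (toCC ψ) - π (toCC ψ) ∘L B) ∘L π (toCC ψ')) v) := by
    simp [hfix v hv, hψv, map_mul, mul_apply_eq_comp]
  have hφψ : ‖π (φ * toCC ψ)‖ ≤ δ := by
    refine (NonUnitalStarAlgHom.norm_apply_le π _).trans
      ((ContinuousMap.norm_le _ hδ.le).2 fun y => ?_)
    by_cases hy : ψ y = 0
    · simpa [hy] using hδ.le
    · have h01 := (hψ.1 y)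
      rw [ContinuousMap.mul_apply, norm_mul, toCC_apply, Complex.norm_real, Real.norm_eq_abs,
        abs_of_nonneg h01.1]
      have : ‖φ y‖ < δ := hψφ y hy
      nlinarith [h01.1, h01.2, norm_nonneg (φ y)]
  rw [dist_zero_right] at hC
  calc ‖(π φ ∘L B) v‖
      ≤ δ * (‖B‖ * ‖v‖) + ‖φ‖ * (η * ‖v‖) := by
        rw [comp_apply, hsplit]
        refine norm_add_le_of_le ?_ ?_
        · exact (le_opNorm _ _).trans (mul_le_mul hφψ (le_opNorm _ _) (norm_nonneg _) hδ.le)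
        · refine (le_opNorm _ _).trans (mul_le_mul (NonUnitalStarAlgHom.norm_apply_le π φ)
            ((le_opNorm _ _).trans (mul_le_mul_of_nonneg_right hC.le (norm_nonneg v)))
            (norm_nonneg _) (norm_nonneg _))
    _ ≤ ε * ‖v‖ := by nlinarith [norm_nonneg v]

lemma LocStrongConv.Jloc_subset_locallyNegligible (hconv : LocStrongConv π) (x : X) :
    Jloc π x ⊆ locallyNegligible π x := by
  refine closure_minimal ?_ (isClosed_locallyNegligible π x)
  rintro _ ⟨n, A, B, φ, -, hB, hφ, rfl⟩
  exact Submodule.sum_mem _ fun i _ =>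
    comp_mem_locallyNegligible π (A i) (hconv.pi_comp_mem_locallyNegligible (hφ i) (hB i))

lemma LocStrongConv.continuousLocalFamily_of_sub_mem_Jloc (hconv : LocStrongConv π)
    {a : X → H →L[ℂ] H} {A : H →L[ℂ] H} (hA : ∀ x, A - a x ∈ Jloc π x) :
    ContinuousLocalFamily π a := by
  intro ε hε
  choose U hU hAU using fun x =>
    hconv.Jloc_subset_locallyNegligible x (hA x) (ε / 2) (half_pos hε)
  refine ⟨U, hU, fun x x' => ?_⟩
  calc normOn π (a x - a x') (U x ∩ U x')
      = normOn π ((A - a x') - (A - a x)) (U x ∩ U x') := by congr 1; abel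
    _ ≤ normOn π (A - a x') (U x') + normOn π (A - a x) (U x) :=
        (normOn_sub_le _ _ _).trans (add_le_add (normOn_mono _ Set.inter_subset_right)
          (normOn_mono _ Set.inter_subset_left))
    _ ≤ ε := by linarith [hAU x, hAU x']

end Realizable

lemma exists_sum_sq_eq_one_subordinate {X : Type*} [TopologicalSpace X] [CompactSpace X]
    [T2Space X] (V : X → Set X) (hV : ∀ x, V x ∈ 𝓝 x) :
    ∃ (n : ℕ) (c : Fin n → X) (σ : Fin n → C(X, ℝ)),
      (∀ y, ∑ i, σ i y ^ 2 = 1) ∧ ∀ i y, σ i y ≠ 0 → y ∈ V (c i) := by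
  obtain ⟨t, ht⟩ := isCompact_univ.elim_finite_subcover (fun x => interior (V x))
    (fun _ => isOpen_interior) fun y _ => Set.mem_iUnion.2 ⟨y, mem_interior_iff_mem_nhds.2 (hV y)⟩
  let c : Fin t.card → X := fun i => t.equivFin.symm i
  have hcover : Set.univ ⊆ ⋃ i, interior (V (c i)) := fun y hy => by
    obtain ⟨x, hx, hyx⟩ := Set.mem_iUnion₂.1 (ht hy)
    exact Set.mem_iUnion.2 ⟨t.equivFin ⟨x, hx⟩, by simpa [c] using hyx⟩
  obtain ⟨f, hfV, hf1, hf01, -⟩ := exists_continuous_sum_one_of_isOpen_isCompact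
    (fun _ => isOpen_interior) isCompact_univ hcover
  refine ⟨t.card, c, fun i => ⟨fun y => √(f i y), by fun_prop⟩, fun y => ?_, fun i y hy => ?_⟩
  · simpa [Real.sq_sqrt (hf01 _ y).1] using hf1 (Set.mem_univ y)
  · exact interior_subset (hfV i (subset_tsupport _ fun h => hy (by simp [h])))

section Gluing

variable {X : Type*} [TopologicalSpace X]
variable {H : Type*} [NormedAddCommGroup H] [InnerProductSpace ℂ H] [CompleteSpace H]
variable (π : C(X, ℂ) →⋆ₐ[ℂ] (H →L[ℂ] H))

noncomputable def glue {ι : Type*} [Fintype ι] (σ : ι → C(X, ℝ)) (A : ι → H →L[ℂ] H) :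
    H →L[ℂ] H :=
  ∑ i, π (toCC (σ i)) * A i * π (toCC (σ i))

lemma glue_mem_localOps {ι : Type*} [Fintype ι] (σ : ι → C(X, ℝ)) {A : ι → H →L[ℂ] H}
    (hA : ∀ i, A i ∈ localOps π) : glue π σ A ∈ localOps π :=
  (localOpsSubalgebra π).sum_mem fun i _ => (localOpsSubalgebra π).mul_mem
    ((localOpsSubalgebra π).mul_mem (pi_mem_localOps π _) (hA i)) (pi_mem_localOps π _)

lemma glue_sub {ι : Type*} [Fintype ι] (σ : ι → C(X, ℝ)) (A B : ι → H →L[ℂ] H) :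
    glue π σ A - glue π σ B = glue π σ (A - B) := by
  simp only [glue, ← Finset.sum_sub_distrib, Pi.sub_apply, mul_sub, sub_mul]

lemma norm_sum_pi_mul_mul_pi_le [CompactSpace X] {ι : Type*} (s : Finset ι)
    {σ τ : ι → C(X, ℝ)} {D : ι → H →L[ℂ] H} {Q : ι → Set X} {ε : ℝ} (hε : 0 ≤ ε)
    (hσ : ∀ y, ∑ i ∈ s, σ i y ^ 2 ≤ 1) (hτ : ∀ y, ∑ i ∈ s, τ i y ^ 2 ≤ 1)
    (hτQ : ∀ i y, τ i y ≠ 0 → y ∈ Q i) (hD : ∀ i ∈ s, normOn π (D i) (Q i) ≤ ε) :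
    ‖∑ i ∈ s, π (toCC (σ i)) * D i * π (toCC (τ i))‖ ≤ ε :=
  norm_sum_mul_mul_le s _ D _ hε
    (fun w => by simpa only [(isSelfAdjoint_pi_toCC π _).adjoint_eq] using
      sum_norm_sq_pi_toCC_le π s hσ w)
    (sum_norm_sq_pi_toCC_le π s hτ) fun i hi v =>
      (norm_apply_le_normOn_mul (pi_toCC_mem_suppSubspace (hτQ i) v) (D i)).trans
        (mul_le_mul_of_nonneg_right (hD i hi) (norm_nonneg _))

lemma isCompactOperator_sandwich_sub_sum {κ : Type*} [Fintype κ] {T : H →L[ℂ] H}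
    (hT : T ∈ localOps π) (f : C(X, ℝ)) {τ : κ → C(X, ℝ)} (hτ : ∀ y, ∑ j, τ j y ^ 2 = 1) :
    IsCompactOperator ⇑(π (toCC f) * T * π (toCC f) -
      ∑ j, π (toCC (f * τ j)) * T * π (toCC (f * τ j))) := by
  set P := π (toCC f)
  have hterm : ∀ j, P * (T * π (toCC (τ j)) - π (toCC (τ j)) * T) * π (toCC (f * τ j)) =
      P * T * P * (π (toCC (τ j)) * π (toCC (τ j))) -
        π (toCC (f * τ j)) * T * π (toCC (f * τ j)) := by
    intro j
    have hcomm : π (toCC (τ j)) * P = P * π (toCC (τ j)) := by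
      simp only [P, pi_toCC_mul, mul_comm]
    simp only [← pi_toCC_mul]
    calc P * (T * π (toCC (τ j)) - π (toCC (τ j)) * T) * (P * π (toCC (τ j)))
        = P * T * (π (toCC (τ j)) * P) * π (toCC (τ j)) -
          P * π (toCC (τ j)) * T * (P * π (toCC (τ j))) := by noncomm_ring
      _ = _ := by rw [hcomm]; noncomm_ring
  have hsum := Finset.sum_congr rfl fun j (_ : j ∈ Finset.univ) => hterm j
  rw [Finset.sum_sub_distrib, ← Finset.mul_sum, sum_pi_toCC_mul_self π hτ, mul_one] at hsum
  rw [← hsum]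
  exact isCompactOperator_sum _ fun j _ => isCompactOperator_mul_mul _ _ (hT (toCC (τ j)))

lemma isCompactOperator_glue_sub_glue_mul {ι κ : Type*} [Fintype ι] [Fintype κ]
    (σ : ι → C(X, ℝ)) {A : ι → H →L[ℂ] H} (hA : ∀ i, A i ∈ localOps π) {τ : κ → C(X, ℝ)}
    (hτ : ∀ y, ∑ j, τ j y ^ 2 = 1) :
    IsCompactOperator ⇑(glue π σ A - glue π (fun p : ι × κ => σ p.1 * τ p.2) (fun p => A p.1)) := by
  rw [glue, glue, Fintype.sum_prod_type, ← Finset.sum_sub_distrib]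
  exact isCompactOperator_sum _ fun i _ => isCompactOperator_sandwich_sub_sum π (hA i) (σ i) hτ

end Gluing

section Approximation

variable {X : Type*} [TopologicalSpace X] [CompactSpace X]
variable {H : Type*} [NormedAddCommGroup H] [InnerProductSpace ℂ H] [CompleteSpace H]
variable {π : C(X, ℂ) →⋆ₐ[ℂ] (H →L[ℂ] H)} {a : X → H →L[ℂ] H} {U : X → Set X} {ε : ℝ}

lemma exists_isCompactOperator_norm_glue_sub_glue_sub_le {ι κ : Type*} [Fintype ι] [Fintype κ]
    (ha : ∀ x, a x ∈ localOps π) (hε : 0 ≤ ε)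
    (hU : ∀ x x', normOn π (a x - a x') (U x ∩ U x') ≤ ε)
    {c : ι → X} {σ : ι → C(X, ℝ)} (hσ : ∀ y, ∑ i, σ i y ^ 2 = 1)
    (hσU : ∀ i y, σ i y ≠ 0 → y ∈ U (c i))
    {d : κ → X} {τ : κ → C(X, ℝ)} (hτ : ∀ y, ∑ j, τ j y ^ 2 = 1)
    (hτU : ∀ j y, τ j y ≠ 0 → y ∈ U (d j)) :
    ∃ K : H →L[ℂ] H, IsCompactOperator K ∧
      ‖glue π σ (fun i => a (c i)) - glue π τ (fun j => a (d j)) - K‖ ≤ ε := by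
  set ρ : ι × κ → C(X, ℝ) := fun p => σ p.1 * τ p.2
  have hρ : ∀ y, ∑ p, ρ p y ^ 2 ≤ 1 := fun y => by
    simp [ρ, mul_pow, Fintype.sum_prod_type, ← Finset.mul_sum, hσ, hτ]
  have hswap : glue π (fun q : κ × ι => τ q.1 * σ q.2) (fun q => a (d q.1)) =
      glue π ρ (fun p => a (d p.2)) := by
    rw [glue, glue, ← (Equiv.prodComm ι κ).sum_comp]
    simp [ρ, mul_comm]
  refine ⟨(glue π σ (fun i => a (c i)) - glue π ρ (fun p => a (c p.1))) -
      (glue π τ (fun j => a (d j)) - glue π ρ (fun p => a (d p.2))),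
    (isCompactOperator_glue_sub_glue_mul π σ (fun i => ha (c i)) hτ).sub
      (hswap ▸ isCompactOperator_glue_sub_glue_mul π τ (fun j => ha (d j)) hσ), ?_⟩
  rw [show ∀ A B C D : H →L[ℂ] H, A - B - ((A - C) - (B - D)) = C - D from
    fun _ _ _ _ => by abel, glue_sub]
  exact norm_sum_pi_mul_mul_pi_le π _ hε (fun y => hρ y) (fun y => hρ y)
    (Q := fun p => U (c p.1) ∩ U (d p.2))
    (fun p y hy => ⟨hσU _ _ (left_ne_zero_of_mul hy), hτU _ _ (right_ne_zero_of_mul hy)⟩)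
    fun p _ => hU _ _

lemma LocStrongConv.exists_mem_Jloc_norm_glue_sub_sub_le [T2Space X] (hconv : LocStrongConv π)
    {ι : Type*} [Fintype ι] (ha : ∀ x, a x ∈ localOps π) (hε : 0 ≤ ε)
    (hU : ∀ x x', normOn π (a x - a x') (U x ∩ U x') ≤ ε)
    {c : ι → X} {σ : ι → C(X, ℝ)} (hσ : ∀ y, ∑ i, σ i y ^ 2 = 1)
    (hσU : ∀ i y, σ i y ≠ 0 → y ∈ U (c i)) {x : X} (hUx : U x ∈ 𝓝 x) :
    ∃ j ∈ Jloc π x, ‖glue π σ (fun i => a (c i)) - a x - j‖ ≤ ε := by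
  obtain ⟨θ, hθ, hθU⟩ := exists_mem_locClass_support_subset hUx
  set E := glue π σ (fun i => a (c i) - a x)
  have hE : E ∈ localOps π :=
    glue_mem_localOps π σ fun i => (localOpsSubalgebra π).sub_mem (ha (c i)) (ha x)
  have hK : IsCompactOperator (glue π σ (fun _ => a x) - a x) := by
    simpa [glue, toCC_one] using (isCompactOperator_sandwich_sub_sum π (ha x) 1 hσ).neg
  -- `E π (1 - θ) ∈ J_x` because `θ x = 1`, and `E π θ` only sees vectors supported in `U x`.
  refine ⟨E * π (toCC (1 - θ)) + (glue π σ (fun _ => a x) - a x),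
    (JlocSubmodule π x).add_mem (comp_pi_mem_Jloc π hE (by
      simp [toCC_sub, apply_eq_one_of_mem_locClass hθ])) (hconv.compact_mem_Jloc x hK), ?_⟩
  have hEθ : glue π σ (fun i => a (c i)) - a x - (E * π (toCC (1 - θ)) +
      (glue π σ (fun _ => a x) - a x)) =
      ∑ i, π (toCC (σ i)) * (a (c i) - a x) * π (toCC (σ i * θ)) := by
    have hsub : glue π σ (fun i => a (c i)) - glue π σ (fun _ => a x) = E := glue_sub π σ _ _
    calc _ = E - E * π (toCC (1 - θ)) := by rw [← hsub]; abel
      _ = E * π (toCC θ) := by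
        rw [toCC_sub, toCC_one, map_sub, map_one, mul_sub, mul_one, sub_sub_cancel]
      _ = _ := by simp only [E, glue, Finset.sum_mul, mul_assoc, pi_toCC_mul]
  rw [hEθ]
  refine norm_sum_pi_mul_mul_pi_le π _ hε (fun y => (hσ y).le) (fun y => ?_)
    (Q := fun i => U (c i) ∩ U x)
    (fun i y hy => ⟨hσU _ _ (left_ne_zero_of_mul hy), hθU _ (right_ne_zero_of_mul hy)⟩)
    fun i _ => hU _ _
  have := hθ.1 y
  simp only [ContinuousMap.mul_apply, mul_pow, ← Finset.sum_mul, hσ, one_mul]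
  exact pow_le_one₀ this.1 this.2

end Approximation

section Limit

variable {X : Type*} [TopologicalSpace X] [CompactSpace X] [T2Space X]
variable {H : Type*} [NormedAddCommGroup H] [InnerProductSpace ℂ H] [CompleteSpace H]
variable {π : C(X, ℂ) →⋆ₐ[ℂ] (H →L[ℂ] H)} {a : X → H →L[ℂ] H}

lemma ContinuousLocalFamily.exists_antitone_nhds (h : ContinuousLocalFamily π a) :
    ∃ W : ℕ → X → Set X, (∀ n x, W n x ∈ 𝓝 x) ∧ (∀ n x, W (n + 1) x ⊆ W n x) ∧
      ∀ n x x', normOn π (a x - a x') (W n x ∩ W n x') ≤ (1 / 2) ^ n := by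
  choose U hU hUa using fun n : ℕ => h ((1 / 2) ^ n) (by positivity)
  have hsub : ∀ n x, ⋂ k ∈ Finset.range (n + 1), U k x ⊆ U n x := fun n x =>
    Set.biInter_subset_of_mem (Finset.self_mem_range_succ n)
  refine ⟨fun n x => ⋂ k ∈ Finset.range (n + 1), U k x,
    fun n x => (Filter.biInter_finset_mem _).2 fun k _ => hU k x,
    fun n x => Set.biInter_subset_biInter_left fun k hk => ?_,
    fun n x x' => (normOn_mono _ (Set.inter_subset_inter (hsub n x) (hsub n x'))).trans
      (hUa n x x')⟩
  simp only [Finset.coe_range, Set.mem_Iio] at hk ⊢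
  omega

lemma LocStrongConv.exists_mem_localOps_sub_mem_Jloc_of_approx (hconv : LocStrongConv π)
    (A : ℕ → H →L[ℂ] H) (hA : ∀ n, A n ∈ localOps π) (K : ℕ → H →L[ℂ] H)
    (hK : ∀ n, IsCompactOperator (K n)) (hstep : ∀ n, ‖A (n + 1) - A n - K n‖ ≤ (1 / 2) ^ n)
    (hpoint : ∀ n x, ∃ j ∈ Jloc π x, ‖A n - a x - j‖ ≤ (1 / 2) ^ n) :
    ∃ L ∈ localOps π, ∀ x, L - a x ∈ Jloc π x := by
  -- Subtracting the accumulated compact corrections makes the sequence Cauchy.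
  set B : ℕ → H →L[ℂ] H := fun n => A n - ∑ k ∈ Finset.range n, K k
  have hcompact : ∀ n, IsCompactOperator ⇑(∑ k ∈ Finset.range n, K k) := fun n =>
    isCompactOperator_sum _ fun k _ => hK k
  have hB : CauchySeq B := SeminormedAddCommGroup.cauchySeq_of_le_geometric (C := 1)
    (by norm_num : (1 / 2 : ℝ) < 1) fun n => by
      have : B n - B (n + 1) = -(A (n + 1) - A n - K n) := by
        simp only [B, Finset.sum_range_succ]
        abel
      rw [one_mul, this, norm_neg]
      exact hstep n
  obtain ⟨L, hL⟩ := cauchySeq_tendsto_of_complete hB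
  refine ⟨L, (isClosed_localOps π).mem_of_tendsto hL (Eventually.of_forall fun n =>
    (localOpsSubalgebra π).sub_mem (hA n) (compact_mem_localOps π (hcompact n))), fun x => ?_⟩
  refine (isClosed_Jloc π x).closure_subset (Metric.mem_closure_iff.2 fun δ hδ => ?_)
  obtain ⟨n, hn, hLn⟩ := (((tendsto_pow_atTop_nhds_zero_of_lt_one (by norm_num)
    (by norm_num : (1 / 2 : ℝ) < 1)).eventually (gt_mem_nhds (half_pos hδ))).and
    (Metric.tendsto_nhds.1 hL _ (half_pos hδ))).exists
  obtain ⟨j, hj, hjn⟩ := hpoint n x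
  refine ⟨j - ∑ k ∈ Finset.range n, K k,
    (JlocSubmodule π x).sub_mem hj (hconv.compact_mem_Jloc x (hcompact n)), ?_⟩
  rw [dist_eq_norm, show L - a x - (j - ∑ k ∈ Finset.range n, K k) =
    (L - B n) + (A n - a x - j) by simp only [B]; abel]
  calc ‖(L - B n) + (A n - a x - j)‖ ≤ ‖L - B n‖ + ‖A n - a x - j‖ := norm_add_le _ _
    _ < δ / 2 + δ / 2 := add_lt_add_of_lt_of_le (by rwa [← dist_eq_norm, dist_comm])
      (hjn.trans hn.le)
    _ = δ := add_halves δ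

lemma LocStrongConv.exists_mem_localOps_sub_mem_Jloc (hconv : LocStrongConv π)
    (ha : ∀ x, a x ∈ localOps π) (hcont : ContinuousLocalFamily π a) :
    ∃ A ∈ localOps π, ∀ x, A - a x ∈ Jloc π x := by
  obtain ⟨W, hW, hWanti, hWa⟩ := hcont.exists_antitone_nhds
  choose N c σ hσ hσW using fun n => exists_sum_sq_eq_one_subordinate (W n) (hW n)
  choose K hK hstep using fun n => exists_isCompactOperator_norm_glue_sub_glue_sub_le ha
    (by positivity) (hWa n) (hσ (n + 1)) (fun i y hy => hWanti n _ (hσW (n + 1) i y hy))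
    (hσ n) (hσW n)
  exact hconv.exists_mem_localOps_sub_mem_Jloc_of_approx
    (fun n => glue π (σ n) fun i => a (c n i)) (fun n => glue_mem_localOps π _ fun i => ha _)
    K hK hstep fun n x => hconv.exists_mem_Jloc_norm_glue_sub_sub_le ha (by positivity) (hWa n)
      (hσ n) (hσW n) (hW n x)

end Limit

theorem local_family_realizable_iff_continuous_general
    {X : Type*} [TopologicalSpace X] [CompactSpace X] [T2Space X]
    {H : Type*} [NormedAddCommGroup H] [InnerProductSpace ℂ H] [CompleteSpace H]
    (π : C(X, ℂ) →⋆ₐ[ℂ] (H →L[ℂ] H)) (hconv : LocStrongConv π)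
    (a : X → H →L[ℂ] H) (ha : ∀ x, a x ∈ localOps π) :
    (∃ A ∈ localOps π, ∀ x : X, A - a x ∈ Jloc π x) ↔
      ContinuousLocalFamily π a :=
  ⟨fun ⟨_, _, hA⟩ => hconv.continuousLocalFamily_of_sub_mem_Jloc hA,
    hconv.exists_mem_localOps_sub_mem_Jloc ha⟩

/-- Under the localization hypotheses, a family of local representatives
`{a_x ∈ 𝒜_x}` (given by representatives `a x ∈ 𝒜`) is the localization `{p_x(A)}` of a
single local operator `A ∈ 𝒜` if and only if the family is continuous. -/
theorem local_family_realizable_iff_continuous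
    {X : Type*} [TopologicalSpace X] [CompactSpace X] [T2Space X]
    {H : Type*} [NormedAddCommGroup H] [InnerProductSpace ℂ H] [CompleteSpace H]
    (π : C(X, ℂ) →⋆ₐ[ℂ] (H →L[ℂ] H)) (hπ : FaithfulNoCompact π) (hconv : LocStrongConv π)
    (a : X → H →L[ℂ] H) (ha : ∀ x, a x ∈ localOps π) :
    (∃ A ∈ localOps π, ∀ x : X, A - a x ∈ Jloc π x) ↔
      ContinuousLocalFamily π a :=
  local_family_realizable_iff_continuous_general π hconv a ha
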